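/- The (A⊗A, A)-bimodule Δ spanned by {d_{n1 n2 l}} with left action (a_{m1 j1} ⊗ a_{m2 j2})·d_{n1 n2 l} = e^{−iλ[(n1+m1)j1 + (n2+m2)j2]} d_{n1+m1, n2+m2, l−j1−j2} and right action d_{n1 n2 l}·a_{mj} = e^{iλm(l−j)} d_{n1+m, n2+m, l−j} satisfies the coassociativity axiom: the (A⊗A⊗A, A)-bimodules (A ⊗ Δ) ⊗_{A⊗A} Δ and (Δ ⊗ A) ⊗_{A⊗A} Δ are isomorphic. -/

import Mathlib

open TensorProduct MulOpposite

section

variable {A D : Type} [Ring A] [Algebra ℂ A] [AddCommGroup D] [Module ℂ D]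

instance coassocAddCommGroup₁ : AddCommGroup (TensorProduct ℂ (TensorProduct ℂ A D) D) :=
  TensorProduct.addCommGroup

instance coassocAddCommGroup₂ : AddCommGroup (TensorProduct ℂ (TensorProduct ℂ D A) D) :=
  TensorProduct.addCommGroup

/-- The subspace of relations defining the balanced tensor product
`(A ⊗ Δ) ⊗_{A⊗A} Δ` inside `(A ⊗ Δ) ⊗ Δ` (tensor products over `ℂ`). -/
noncomputable def coassocRel₁ (rhoL : TensorProduct ℂ A A →ₐ[ℂ] Module.End ℂ D)
    (rhoR : Aᵐᵒᵖ →ₐ[ℂ] Module.End ℂ D) :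
    Submodule ℂ (TensorProduct ℂ (TensorProduct ℂ A D) D) :=
  Submodule.span ℂ {z | ∃ (x : TensorProduct ℂ A D) (δ : D) (b₁ b₂ : A),
    z = (TensorProduct.map (LinearMap.mulRight ℂ b₁) (rhoR (op b₂)) x) ⊗ₜ[ℂ] δ
        - x ⊗ₜ[ℂ] (rhoL (b₁ ⊗ₜ[ℂ] b₂) δ)}

/-- The subspace of relations defining the balanced tensor product
`(Δ ⊗ A) ⊗_{A⊗A} Δ` inside `(Δ ⊗ A) ⊗ Δ`. -/
noncomputable def coassocRel₂ (rhoL : TensorProduct ℂ A A →ₐ[ℂ] Module.End ℂ D)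
    (rhoR : Aᵐᵒᵖ →ₐ[ℂ] Module.End ℂ D) :
    Submodule ℂ (TensorProduct ℂ (TensorProduct ℂ D A) D) :=
  Submodule.span ℂ {z | ∃ (x : TensorProduct ℂ D A) (δ : D) (b₁ b₂ : A),
    z = (TensorProduct.map (rhoR (op b₁)) (LinearMap.mulRight ℂ b₂) x) ⊗ₜ[ℂ] δ
        - x ⊗ₜ[ℂ] (rhoL (b₁ ⊗ₜ[ℂ] b₂) δ)}

/-- The left action of `c₁ ⊗ c₂ ⊗ c₃ ∈ A ⊗ A ⊗ A` on `(A ⊗ Δ) ⊗ Δ`. -/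
noncomputable def coassocL₁ (rhoL : TensorProduct ℂ A A →ₐ[ℂ] Module.End ℂ D) (c₁ c₂ c₃ : A) :
    TensorProduct ℂ (TensorProduct ℂ A D) D →ₗ[ℂ] TensorProduct ℂ (TensorProduct ℂ A D) D :=
  TensorProduct.map
    (TensorProduct.map (LinearMap.mulLeft ℂ c₁) (rhoL (c₂ ⊗ₜ[ℂ] c₃))) LinearMap.id

/-- The left action of `c₁ ⊗ c₂ ⊗ c₃ ∈ A ⊗ A ⊗ A` on `(Δ ⊗ A) ⊗ Δ`. -/
noncomputable def coassocL₂ (rhoL : TensorProduct ℂ A A →ₐ[ℂ] Module.End ℂ D) (c₁ c₂ c₃ : A) :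
    TensorProduct ℂ (TensorProduct ℂ D A) D →ₗ[ℂ] TensorProduct ℂ (TensorProduct ℂ D A) D :=
  TensorProduct.map
    (TensorProduct.map (rhoL (c₁ ⊗ₜ[ℂ] c₂)) (LinearMap.mulLeft ℂ c₃)) LinearMap.id

/-- The right action of `c ∈ A` on `(A ⊗ Δ) ⊗ Δ` (through the last factor). -/
noncomputable def coassocR₁ (rhoR : Aᵐᵒᵖ →ₐ[ℂ] Module.End ℂ D) (c : A) :
    TensorProduct ℂ (TensorProduct ℂ A D) D →ₗ[ℂ] TensorProduct ℂ (TensorProduct ℂ A D) D :=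
  TensorProduct.map LinearMap.id (rhoR (op c))

/-- The right action of `c ∈ A` on `(Δ ⊗ A) ⊗ Δ` (through the last factor). -/
noncomputable def coassocR₂ (rhoR : Aᵐᵒᵖ →ₐ[ℂ] Module.End ℂ D) (c : A) :
    TensorProduct ℂ (TensorProduct ℂ D A) D →ₗ[ℂ] TensorProduct ℂ (TensorProduct ℂ D A) D :=
  TensorProduct.map LinearMap.id (rhoR (op c))

end

/-!
Both balanced tensor products are free on `ℤ⁴`. In `(A ⊗ Δ) ⊗_{A⊗A} Δ`, one relation with
`b₁ = a_{-m,-j}` and `b₂ = a_{-n₁,l}` turns `(a_{mj} ⊗ d_{n₁n₂l}) ⊗ d_{pqr}` into a phase times the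
normal form `(a₀₀ ⊗ d_{0,n₂-n₁,0}) ⊗ d_{p+m,q+n₁,r+l-j}`, and reading off the phase and the indices
of the normal form is a linear map that vanishes on all relations; so it identifies the quotient
with `ℤ⁴ →₀ ℂ`. Likewise for `(Δ ⊗ A) ⊗_{A⊗A} Δ`, with normal forms
`(d_{u-v,0,0} ⊗ a₀₀) ⊗ d_{v,k+v,c}`. The composite isomorphism intertwines the actions: they
descend to the second quotient because `ρ_L` and `ρ_R` commute, and on basis vectors both sides
are given by the same phases.
-/

section LinearAlgebra

variable {R M N P ι κ : Type*} [CommRing R] [AddCommGroup M] [Module R M]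
  [AddCommGroup N] [Module R N] [AddCommGroup P] [Module R P]

theorem Module.Basis.forall_eq_zero (b : Module.Basis ι R M) {f : M → N}
    (hf : IsLinearMap R f) (h : ∀ i, f (b i) = 0) : ∀ x, f x = 0 :=
  LinearMap.congr_fun (b.ext (f₁ := hf.mk' f) (f₂ := 0) h)

theorem Module.Basis.forall₂_eq_zero (bM : Module.Basis ι R M) (bN : Module.Basis κ R N)
    {F : M → N → P} (h₁ : ∀ y, IsLinearMap R (F · y)) (h₂ : ∀ x, IsLinearMap R (F x))
    (h : ∀ i j, F (bM i) (bN j) = 0) : ∀ x y, F x y = 0 := fun x =>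
  bN.forall_eq_zero (h₂ x) fun j => bM.forall_eq_zero (h₁ (bN j)) (h · j) x

theorem Module.Basis.forall₃_eq_zero {ι' Q : Type*} [AddCommGroup Q] [Module R Q]
    (bM : Module.Basis ι R M) (bN : Module.Basis κ R N) (bP : Module.Basis ι' R P)
    {F : M → N → P → Q} (h₁ : ∀ y z, IsLinearMap R (F · y z))
    (h₂ : ∀ x z, IsLinearMap R (F x · z)) (h₃ : ∀ x y, IsLinearMap R (F x y))
    (h : ∀ i j k, F (bM i) (bN j) (bP k) = 0) : ∀ x y z, F x y z = 0 := fun x y =>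
  bP.forall_eq_zero (h₃ x y) fun k =>
    bM.forall₂_eq_zero bN (h₁ · (bP k)) (h₂ · (bP k)) (h · · k) x y

theorem LinearMap.commute_of_commute_basis {E : Type*} [Ring E] [Algebra R E]
    (bM : Module.Basis ι R M) (bN : Module.Basis κ R N) (f : M →ₗ[R] E) (g : N →ₗ[R] E)
    (h : ∀ i j, Commute (f (bM i)) (g (bN j))) (x : M) (y : N) : Commute (f x) (g y) := by
  have key : (LinearMap.mul R E).compl₁₂ f g = (LinearMap.mul R E).flip.compl₁₂ f g :=
    LinearMap.ext_basis bM bN fun i j => (h i j).eq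
  exact LinearMap.congr_fun₂ key x y

theorem LinearMap.ker_eq_of_basis_sub_mem {p : M →ₗ[R] N} (s : N →ₗ[R] M)
    {S : Submodule R M} (hS : S ≤ LinearMap.ker p) (b : Module.Basis ι R M)
    (hs : ∀ i, s (p (b i)) - b i ∈ S) :
    LinearMap.ker p = S := by
  have hsub : ∀ x, s (p x) - x ∈ S := by
    have : Submodule.span R (Set.range b) ≤ S.comap (s ∘ₗ p - LinearMap.id) :=
      Submodule.span_le.mpr (Set.range_subset_iff.mpr hs)
    rw [b.span_eq] at this
    exact fun x => this Submodule.mem_top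
  refine le_antisymm (fun x hx => ?_) hS
  simpa [LinearMap.mem_ker.mp hx] using S.neg_mem (hsub x)

noncomputable def Submodule.quotEquivOfRightInverse {S : Submodule R M} (p : M →ₗ[R] N)
    (s : N →ₗ[R] M) (hps : p ∘ₗ s = LinearMap.id) (hS : LinearMap.ker p = S) :
    (M ⧸ S) ≃ₗ[R] N :=
  (Submodule.quotEquivOfEq _ _ hS.symm).trans
    (p.quotKerEquivOfSurjective fun y => ⟨s y, LinearMap.congr_fun hps y⟩)

@[simp]
theorem Submodule.quotEquivOfRightInverse_mk {S : Submodule R M} (p : M →ₗ[R] N)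
    (s : N →ₗ[R] M) (hps : p ∘ₗ s = LinearMap.id) (hS : LinearMap.ker p = S) (x : M) :
    Submodule.quotEquivOfRightInverse p s hps hS (Submodule.Quotient.mk x) = p x :=
  rfl

theorem LinearMap.apply_eq_of_ker_le_comap {p₁ : M →ₗ[R] P} {p₂ : N →ₗ[R] P}
    {s₂ : P →ₗ[R] N} (hps : p₂ ∘ₗ s₂ = LinearMap.id) {T₁ : M →ₗ[R] M} {T₂ : N →ₗ[R] N}
    (hT₂ : LinearMap.ker p₂ ≤ (LinearMap.ker p₂).comap T₂)
    (hT : p₁ ∘ₗ T₁ = p₂ ∘ₗ T₂ ∘ₗ s₂ ∘ₗ p₁) {z : M} {w : N} (hzw : p₁ z = p₂ w) :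
    p₁ (T₁ z) = p₂ (T₂ w) := by
  have hw : s₂ (p₁ z) - w ∈ LinearMap.ker p₂ := by
    simp [LinearMap.mem_ker, hzw, ← LinearMap.comp_apply p₂ s₂, hps]
  rw [← LinearMap.comp_apply, hT, ← sub_eq_zero]
  simp only [LinearMap.comp_apply, ← map_sub]
  exact hT₂ hw

end LinearAlgebra

section Bimodule

variable {A D : Type} [Ring A] [Algebra ℂ A] [AddCommGroup D] [Module ℂ D]
  {rhoL : TensorProduct ℂ A A →ₐ[ℂ] Module.End ℂ D} {rhoR : Aᵐᵒᵖ →ₐ[ℂ] Module.End ℂ D}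

theorem coassocRel₂_le_comap_coassocL₂ (hcomm : ∀ t c, Commute (rhoL t) (rhoR (op c)))
    (c₁ c₂ c₃ : A) :
    coassocRel₂ rhoL rhoR ≤ (coassocRel₂ rhoL rhoR).comap (coassocL₂ rhoL c₁ c₂ c₃) := by
  refine Submodule.span_le.mpr ?_
  rintro _ ⟨x, δ, b₁, b₂, rfl⟩
  have hx : TensorProduct.map (rhoL (c₁ ⊗ₜ c₂)) (LinearMap.mulLeft ℂ c₃)
        (TensorProduct.map (rhoR (op b₁)) (LinearMap.mulRight ℂ b₂) x) =
      TensorProduct.map (rhoR (op b₁)) (LinearMap.mulRight ℂ b₂)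
        (TensorProduct.map (rhoL (c₁ ⊗ₜ c₂)) (LinearMap.mulLeft ℂ c₃) x) := by
    rw [← LinearMap.comp_apply, ← LinearMap.comp_apply, ← TensorProduct.map_comp,
      ← TensorProduct.map_comp, ← Module.End.mul_eq_comp, ← Module.End.mul_eq_comp,
      ← Module.End.mul_eq_comp, ← Module.End.mul_eq_comp, (hcomm _ b₁).eq,
      (LinearMap.commute_mulLeft_right c₃ b₂).eq]
  simp only [SetLike.mem_coe, Submodule.mem_comap, map_sub, coassocL₂, TensorProduct.map_tmul,
    LinearMap.id_apply, hx]
  exact Submodule.subset_span ⟨_, δ, b₁, b₂, rfl⟩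

theorem coassocRel₂_le_comap_coassocR₂ (hcomm : ∀ t c, Commute (rhoL t) (rhoR (op c)))
    (c : A) : coassocRel₂ rhoL rhoR ≤ (coassocRel₂ rhoL rhoR).comap (coassocR₂ rhoR c) := by
  refine Submodule.span_le.mpr ?_
  rintro _ ⟨x, δ, b₁, b₂, rfl⟩
  simp only [SetLike.mem_coe, Submodule.mem_comap, map_sub, coassocR₂, TensorProduct.map_tmul,
    LinearMap.id_apply, ← Module.End.mul_apply, ← (hcomm _ c).eq]
  exact Submodule.subset_span ⟨x, rhoR (op c) δ, b₁, b₂, rfl⟩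

end Bimodule

namespace RotationAlgebra

noncomputable def phase (lam : ℝ) (E : ℤ) : ℂ := Complex.exp (Complex.I * (lam * (E : ℝ)))

theorem phase_add (lam : ℝ) (E F : ℤ) : phase lam (E + F) = phase lam E * phase lam F := by
  rw [phase, phase, phase, ← Complex.exp_add]; push_cast; ring_nf

@[simp]
theorem phase_zero (lam : ℝ) : phase lam 0 = 1 := by simp [phase]

abbrev NormalForms : Type := (ℤ × ℤ × ℤ × ℤ) →₀ ℂ

variable {A D : Type} [Ring A] [Algebra ℂ A] [AddCommGroup D] [Module ℂ D]
  (lam : ℝ) (b : Module.Basis (ℤ × ℤ) ℂ A) (bd : Module.Basis (ℤ × ℤ × ℤ) ℂ D)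

noncomputable def basis₁ :
    Module.Basis (((ℤ × ℤ) × (ℤ × ℤ × ℤ)) × (ℤ × ℤ × ℤ)) ℂ ((A ⊗[ℂ] D) ⊗[ℂ] D) :=
  (b.tensorProduct bd).tensorProduct bd

noncomputable def basis₂ :
    Module.Basis (((ℤ × ℤ × ℤ) × (ℤ × ℤ)) × (ℤ × ℤ × ℤ)) ℂ ((D ⊗[ℂ] A) ⊗[ℂ] D) :=
  (bd.tensorProduct b).tensorProduct bd

@[simp]
theorem basis₁_apply (m j n₁ n₂ l p q r : ℤ) :
    basis₁ b bd (((m, j), (n₁, n₂, l)), (p, q, r)) =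
      (b (m, j) ⊗ₜ bd (n₁, n₂, l)) ⊗ₜ bd (p, q, r) := by
  simp [basis₁]

@[simp]
theorem basis₂_apply (n₁ n₂ l m j p q r : ℤ) :
    basis₂ b bd (((n₁, n₂, l), (m, j)), (p, q, r)) =
      (bd (n₁, n₂, l) ⊗ₜ b (m, j)) ⊗ₜ bd (p, q, r) := by
  simp [basis₂]

noncomputable def toNormalForm₁ : (A ⊗[ℂ] D) ⊗[ℂ] D →ₗ[ℂ] NormalForms :=
  (basis₁ b bd).constr ℂ fun ⟨⟨⟨m, j⟩, ⟨n₁, n₂, l⟩⟩, ⟨p, q, r⟩⟩ =>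
    phase lam (-(m * j) - p * j + q * l) • Finsupp.single (n₂ - n₁, p + m, q + n₁, r + l - j) 1

noncomputable def toNormalForm₂ : (D ⊗[ℂ] A) ⊗[ℂ] D →ₗ[ℂ] NormalForms :=
  (basis₂ b bd).constr ℂ fun ⟨⟨⟨n₁, n₂, l⟩, ⟨m, j⟩⟩, ⟨p, q, r⟩⟩ =>
    phase lam (p * l - q * j - m * j) • Finsupp.single (q + m - p - n₂, n₁ + p, p + n₂, r + l - j) 1

noncomputable def ofNormalForm₁ : NormalForms →ₗ[ℂ] (A ⊗[ℂ] D) ⊗[ℂ] D :=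
  Finsupp.linearCombination ℂ fun ⟨k, u, v, c⟩ => (b (0, 0) ⊗ₜ bd (0, k, 0)) ⊗ₜ bd (u, v, c)

noncomputable def ofNormalForm₂ : NormalForms →ₗ[ℂ] (D ⊗[ℂ] A) ⊗[ℂ] D :=
  Finsupp.linearCombination ℂ fun ⟨k, u, v, c⟩ => (bd (u - v, 0, 0) ⊗ₜ b (0, 0)) ⊗ₜ bd (v, k + v, c)

@[simp]
theorem toNormalForm₁_tmul (m j n₁ n₂ l p q r : ℤ) :
    toNormalForm₁ lam b bd ((b (m, j) ⊗ₜ bd (n₁, n₂, l)) ⊗ₜ bd (p, q, r)) =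
      phase lam (-(m * j) - p * j + q * l) •
        Finsupp.single (n₂ - n₁, p + m, q + n₁, r + l - j) 1 := by
  rw [← basis₁_apply, toNormalForm₁, Module.Basis.constr_basis]

@[simp]
theorem toNormalForm₂_tmul (n₁ n₂ l m j p q r : ℤ) :
    toNormalForm₂ lam b bd ((bd (n₁, n₂, l) ⊗ₜ b (m, j)) ⊗ₜ bd (p, q, r)) =
      phase lam (p * l - q * j - m * j) •
        Finsupp.single (q + m - p - n₂, n₁ + p, p + n₂, r + l - j) 1 := by
  rw [← basis₂_apply, toNormalForm₂, Module.Basis.constr_basis]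

@[simp]
theorem ofNormalForm₁_single (k u v c : ℤ) :
    ofNormalForm₁ b bd (Finsupp.single (k, u, v, c) 1) =
      (b (0, 0) ⊗ₜ bd (0, k, 0)) ⊗ₜ bd (u, v, c) := by
  simp [ofNormalForm₁]

@[simp]
theorem ofNormalForm₂_single (k u v c : ℤ) :
    ofNormalForm₂ b bd (Finsupp.single (k, u, v, c) 1) =
      (bd (u - v, 0, 0) ⊗ₜ b (0, 0)) ⊗ₜ bd (v, k + v, c) := by
  simp [ofNormalForm₂]

theorem toNormalForm₁_comp_ofNormalForm₁ :
    toNormalForm₁ lam b bd ∘ₗ ofNormalForm₁ b bd = LinearMap.id :=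
  Finsupp.basisSingleOne.ext fun ⟨k, u, v, c⟩ => by simp

theorem toNormalForm₂_comp_ofNormalForm₂ :
    toNormalForm₂ lam b bd ∘ₗ ofNormalForm₂ b bd = LinearMap.id :=
  Finsupp.basisSingleOne.ext fun ⟨k, u, v, c⟩ => by simp

variable {lam b bd} {rhoL : A ⊗[ℂ] A →ₐ[ℂ] Module.End ℂ D} {rhoR : Aᵐᵒᵖ →ₐ[ℂ] Module.End ℂ D}
  (hmul : ∀ n₁ l₁ n₂ l₂ : ℤ,
    b (n₁, l₁) * b (n₂, l₂) = phase lam (n₁ * l₂) • b (n₁ + n₂, l₁ + l₂))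
  (hL : ∀ m₁ j₁ m₂ j₂ n₁ n₂ l : ℤ, rhoL (b (m₁, j₁) ⊗ₜ b (m₂, j₂)) (bd (n₁, n₂, l)) =
    phase lam (-((n₁ + m₁) * j₁ + (n₂ + m₂) * j₂)) • bd (n₁ + m₁, n₂ + m₂, l - j₁ - j₂))
  (hR : ∀ m j n₁ n₂ l : ℤ, rhoR (op (b (m, j))) (bd (n₁, n₂, l)) =
    phase lam (m * (l - j)) • bd (n₁ + m, n₂ + m, l - j))

include hL hR in
theorem commute_rhoL_rhoR (t : A ⊗[ℂ] A) (c : A) : Commute (rhoL t) (rhoR (op c)) := by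
  refine LinearMap.commute_of_commute_basis (b.tensorProduct b) b rhoL.toLinearMap
    (rhoR.toLinearMap ∘ₗ (MulOpposite.opLinearEquiv ℂ).toLinearMap)
    (fun ⟨⟨m₁, j₁⟩, ⟨m₂, j₂⟩⟩ ⟨m, j⟩ => ?_) t c
  refine Commute.eq (bd.ext fun ⟨n₁, n₂, l⟩ => ?_)
  simp only [Module.End.mul_apply, AlgHom.toLinearMap_apply, LinearMap.comp_apply,
    Module.Basis.tensorProduct_apply, LinearEquiv.coe_coe, MulOpposite.coe_opLinearEquiv, hR, hL,
    map_smul, smul_smul, ← phase_add]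
  congr 2 <;> ring_nf

include hmul hL hR in
theorem ofNormalForm₁_toNormalForm₁_sub_mem (i) :
    ofNormalForm₁ b bd (toNormalForm₁ lam b bd (basis₁ b bd i)) - basis₁ b bd i ∈
      coassocRel₁ rhoL rhoR := by
  obtain ⟨⟨⟨m, j⟩, ⟨n₁, n₂, l⟩⟩, ⟨p, q, r⟩⟩ := i
  have hgen : (TensorProduct.map (LinearMap.mulRight ℂ (b (-m, -j))) (rhoR (op (b (-n₁, l))))
        (b (m, j) ⊗ₜ bd (n₁, n₂, l))) ⊗ₜ bd (p + m, q + n₁, r + l - j) -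
      (b (m, j) ⊗ₜ bd (n₁, n₂, l)) ⊗ₜ
        rhoL (b (-m, -j) ⊗ₜ b (-n₁, l)) (bd (p + m, q + n₁, r + l - j)) ∈ coassocRel₁ rhoL rhoR :=
    Submodule.subset_span ⟨_, _, _, _, rfl⟩
  convert Submodule.smul_mem _ (phase lam (-(p * j) + q * l)) hgen using 1
  simp only [basis₁_apply, toNormalForm₁_tmul, map_smul, ofNormalForm₁_single,
    TensorProduct.map_tmul, LinearMap.mulRight_apply, hmul, hR, hL, smul_tmul', tmul_smul,
    smul_sub, smul_smul, ← phase_add]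
  congr 1
  · congr 2 <;> ring_nf
  · ring_nf; simp

include hmul hL hR in
theorem ofNormalForm₂_toNormalForm₂_sub_mem (i) :
    ofNormalForm₂ b bd (toNormalForm₂ lam b bd (basis₂ b bd i)) - basis₂ b bd i ∈
      coassocRel₂ rhoL rhoR := by
  obtain ⟨⟨⟨n₁, n₂, l⟩, ⟨m, j⟩⟩, ⟨p, q, r⟩⟩ := i
  have hgen : (TensorProduct.map (rhoR (op (b (-n₂, l)))) (LinearMap.mulRight ℂ (b (-m, -j)))
        (bd (n₁, n₂, l) ⊗ₜ b (m, j))) ⊗ₜ bd (p + n₂, q + m, r + l - j) -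
      (bd (n₁, n₂, l) ⊗ₜ b (m, j)) ⊗ₜ
        rhoL (b (-n₂, l) ⊗ₜ b (-m, -j)) (bd (p + n₂, q + m, r + l - j)) ∈ coassocRel₂ rhoL rhoR :=
    Submodule.subset_span ⟨_, _, _, _, rfl⟩
  convert Submodule.smul_mem _ (phase lam (p * l - q * j)) hgen using 1
  simp only [basis₂_apply, toNormalForm₂_tmul, map_smul, ofNormalForm₂_single,
    TensorProduct.map_tmul, LinearMap.mulRight_apply, hmul, hR, hL, smul_tmul', tmul_smul,
    smul_sub, smul_smul, ← phase_add]
  congr 1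
  · congr 2 <;> ring_nf
  · ring_nf; simp

include hmul hL hR in
theorem toNormalForm₁_relation_tmul (m j n₁ n₂ l p q r : ℤ) (b₁ b₂ : A) :
    toNormalForm₁ lam b bd ((TensorProduct.map (LinearMap.mulRight ℂ b₁) (rhoR (op b₂))
        (b (m, j) ⊗ₜ bd (n₁, n₂, l))) ⊗ₜ bd (p, q, r)) =
      toNormalForm₁ lam b bd ((b (m, j) ⊗ₜ bd (n₁, n₂, l)) ⊗ₜ rhoL (b₁ ⊗ₜ b₂) (bd (p, q, r))) := by
  rw [← sub_eq_zero]
  revert b₁ b₂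
  refine b.forall₂_eq_zero b (fun _ => ⟨fun u v => ?_, fun c u => ?_⟩)
    (fun _ => ⟨fun u v => ?_, fun c u => ?_⟩) fun ⟨m₁, j₁⟩ ⟨m₂, j₂⟩ => ?_ <;>
  simp only [TensorProduct.map_tmul, LinearMap.mulRight_apply, mul_add, add_tmul, tmul_add,
    map_add, LinearMap.add_apply, op_add, mul_smul_comm, ← smul_tmul', tmul_smul, map_smul,
    LinearMap.smul_apply, op_smul, smul_sub]
  · abel
  · abel
  rw [hmul, hR, hL]
  simp only [← smul_tmul', tmul_smul, map_smul, toNormalForm₁_tmul, smul_smul, ← phase_add,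
    sub_eq_zero]
  congr 2 <;> ring_nf

include hmul hL hR in
theorem coassocRel₁_le_ker_toNormalForm₁ :
    coassocRel₁ rhoL rhoR ≤ LinearMap.ker (toNormalForm₁ lam b bd) := by
  refine Submodule.span_le.mpr ?_
  rintro _ ⟨x, δ, b₁, b₂, rfl⟩
  have key : toNormalForm₁ lam b bd ∘ₗ
        TensorProduct.map (TensorProduct.map (LinearMap.mulRight ℂ b₁) (rhoR (op b₂))) .id =
      toNormalForm₁ lam b bd ∘ₗ TensorProduct.map .id (rhoL (b₁ ⊗ₜ b₂)) :=
    (basis₁ b bd).ext fun ⟨⟨⟨m, j⟩, ⟨n₁, n₂, l⟩⟩, ⟨p, q, r⟩⟩ => by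
      simpa using toNormalForm₁_relation_tmul hmul hL hR m j n₁ n₂ l p q r b₁ b₂
  simpa [sub_eq_zero] using LinearMap.congr_fun key (x ⊗ₜ δ)

include hmul hL hR in
theorem toNormalForm₂_relation_tmul (n₁ n₂ l m j p q r : ℤ) (b₁ b₂ : A) :
    toNormalForm₂ lam b bd ((TensorProduct.map (rhoR (op b₁)) (LinearMap.mulRight ℂ b₂)
        (bd (n₁, n₂, l) ⊗ₜ b (m, j))) ⊗ₜ bd (p, q, r)) =
      toNormalForm₂ lam b bd ((bd (n₁, n₂, l) ⊗ₜ b (m, j)) ⊗ₜ rhoL (b₁ ⊗ₜ b₂) (bd (p, q, r))) := by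
  rw [← sub_eq_zero]
  revert b₁ b₂
  refine b.forall₂_eq_zero b (fun _ => ⟨fun u v => ?_, fun c u => ?_⟩)
    (fun _ => ⟨fun u v => ?_, fun c u => ?_⟩) fun ⟨m₁, j₁⟩ ⟨m₂, j₂⟩ => ?_ <;>
  simp only [TensorProduct.map_tmul, LinearMap.mulRight_apply, mul_add, add_tmul, tmul_add,
    map_add, LinearMap.add_apply, op_add, mul_smul_comm, ← smul_tmul', tmul_smul, map_smul,
    LinearMap.smul_apply, op_smul, smul_sub]
  · abel
  · abel
  rw [hmul, hR, hL]
  simp only [← smul_tmul', tmul_smul, map_smul, toNormalForm₂_tmul, smul_smul, ← phase_add,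
    sub_eq_zero]
  congr 2 <;> ring_nf

include hmul hL hR in
theorem coassocRel₂_le_ker_toNormalForm₂ :
    coassocRel₂ rhoL rhoR ≤ LinearMap.ker (toNormalForm₂ lam b bd) := by
  refine Submodule.span_le.mpr ?_
  rintro _ ⟨x, δ, b₁, b₂, rfl⟩
  have key : toNormalForm₂ lam b bd ∘ₗ
        TensorProduct.map (TensorProduct.map (rhoR (op b₁)) (LinearMap.mulRight ℂ b₂)) .id =
      toNormalForm₂ lam b bd ∘ₗ TensorProduct.map .id (rhoL (b₁ ⊗ₜ b₂)) :=
    (basis₂ b bd).ext fun ⟨⟨⟨n₁, n₂, l⟩, ⟨m, j⟩⟩, ⟨p, q, r⟩⟩ => by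
      simpa using toNormalForm₂_relation_tmul hmul hL hR n₁ n₂ l m j p q r b₁ b₂
  simpa [sub_eq_zero] using LinearMap.congr_fun key (x ⊗ₜ δ)

include hmul hL hR in
theorem ker_toNormalForm₁ : LinearMap.ker (toNormalForm₁ lam b bd) = coassocRel₁ rhoL rhoR :=
  LinearMap.ker_eq_of_basis_sub_mem (ofNormalForm₁ b bd)
    (coassocRel₁_le_ker_toNormalForm₁ hmul hL hR)
    (basis₁ b bd) (ofNormalForm₁_toNormalForm₁_sub_mem hmul hL hR)

include hmul hL hR in
theorem ker_toNormalForm₂ : LinearMap.ker (toNormalForm₂ lam b bd) = coassocRel₂ rhoL rhoR :=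
  LinearMap.ker_eq_of_basis_sub_mem (ofNormalForm₂ b bd)
    (coassocRel₂_le_ker_toNormalForm₂ hmul hL hR)
    (basis₂ b bd) (ofNormalForm₂_toNormalForm₂_sub_mem hmul hL hR)

include hmul hL in
theorem toNormalForm₁_coassocL₁_basis (i) (c₁ c₂ c₃ : A) :
    toNormalForm₁ lam b bd (coassocL₁ rhoL c₁ c₂ c₃ (basis₁ b bd i)) =
      toNormalForm₂ lam b bd (coassocL₂ rhoL c₁ c₂ c₃
        (ofNormalForm₂ b bd (toNormalForm₁ lam b bd (basis₁ b bd i)))) := by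
  obtain ⟨⟨⟨m, j⟩, ⟨n₁, n₂, l⟩⟩, ⟨p, q, r⟩⟩ := i
  simp only [basis₁_apply, toNormalForm₁_tmul, map_smul, ofNormalForm₂_single]
  rw [← sub_eq_zero]
  revert c₁ c₂ c₃
  refine b.forall₃_eq_zero b b (fun _ _ => ⟨fun u v => ?_, fun c u => ?_⟩)
    (fun _ _ => ⟨fun u v => ?_, fun c u => ?_⟩) (fun _ _ => ⟨fun u v => ?_, fun c u => ?_⟩)
    fun ⟨m₁, j₁⟩ ⟨m₂, j₂⟩ ⟨m₃, j₃⟩ => ?_ <;>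
  simp only [coassocL₁, coassocL₂, TensorProduct.map_tmul, LinearMap.mulLeft_apply,
    LinearMap.id_apply, add_mul, add_tmul, tmul_add, map_add, LinearMap.add_apply,
    smul_mul_assoc, ← smul_tmul', tmul_smul, map_smul, LinearMap.smul_apply, smul_add, smul_sub,
    smul_smul, mul_comm]
  · abel
  · abel
  · abel
  rw [hmul, hmul, hL, hL]
  simp only [← smul_tmul', tmul_smul, map_smul, toNormalForm₁_tmul, toNormalForm₂_tmul,
    smul_smul, ← phase_add, sub_eq_zero]
  congr 2 <;> ring_nf

include hR in
theorem toNormalForm₁_coassocR₁_basis (i) (c : A) :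
    toNormalForm₁ lam b bd (coassocR₁ rhoR c (basis₁ b bd i)) =
      toNormalForm₂ lam b bd (coassocR₂ rhoR c
        (ofNormalForm₂ b bd (toNormalForm₁ lam b bd (basis₁ b bd i)))) := by
  obtain ⟨⟨⟨m, j⟩, ⟨n₁, n₂, l⟩⟩, ⟨p, q, r⟩⟩ := i
  simp only [basis₁_apply, toNormalForm₁_tmul, map_smul, ofNormalForm₂_single]
  rw [← sub_eq_zero]
  revert c
  refine b.forall_eq_zero ⟨fun u v => ?_, fun c u => ?_⟩ fun ⟨m', j'⟩ => ?_ <;>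
  simp only [coassocR₁, coassocR₂, TensorProduct.map_tmul, LinearMap.id_apply, op_add, map_add,
    LinearMap.add_apply, tmul_add, op_smul, map_smul, LinearMap.smul_apply, tmul_smul, smul_add,
    smul_sub, smul_smul, mul_comm]
  · abel
  rw [hR, hR]
  simp only [tmul_smul, map_smul, toNormalForm₁_tmul, toNormalForm₂_tmul, smul_smul,
    ← phase_add, sub_eq_zero]
  congr 2 <;> ring_nf

include hmul hL in
theorem toNormalForm₁_comp_coassocL₁ (c₁ c₂ c₃ : A) :
    toNormalForm₁ lam b bd ∘ₗ coassocL₁ rhoL c₁ c₂ c₃ = toNormalForm₂ lam b bd ∘ₗ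
      coassocL₂ rhoL c₁ c₂ c₃ ∘ₗ ofNormalForm₂ b bd ∘ₗ toNormalForm₁ lam b bd :=
  (basis₁ b bd).ext fun i => toNormalForm₁_coassocL₁_basis hmul hL i c₁ c₂ c₃

include hR in
theorem toNormalForm₁_comp_coassocR₁ (c : A) :
    toNormalForm₁ lam b bd ∘ₗ coassocR₁ rhoR c = toNormalForm₂ lam b bd ∘ₗ
      coassocR₂ rhoR c ∘ₗ ofNormalForm₂ b bd ∘ₗ toNormalForm₁ lam b bd :=
  (basis₁ b bd).ext fun i => toNormalForm₁_coassocR₁_basis hR i c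

end RotationAlgebra

open RotationAlgebra

theorem coproduct_coassociativity_general
    (lam : ℝ)
    (A : Type) [Ring A] [Algebra ℂ A]
    (a : ℤ → ℤ → A)
    (b : Module.Basis (ℤ × ℤ) ℂ A) (hb : ∀ n l : ℤ, b (n, l) = a n l)
    (hmul : ∀ n₁ l₁ n₂ l₂ : ℤ,
      a n₁ l₁ * a n₂ l₂ =
        Complex.exp (Complex.I * (lam * n₁ * l₂)) • a (n₁ + n₂) (l₁ + l₂))
    (D : Type) [AddCommGroup D] [Module ℂ D]
    (dd : ℤ → ℤ → ℤ → D)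
    (bd : Module.Basis (ℤ × ℤ × ℤ) ℂ D) (hbd : ∀ n₁ n₂ l : ℤ, bd (n₁, n₂, l) = dd n₁ n₂ l)
    (rhoL : TensorProduct ℂ A A →ₐ[ℂ] Module.End ℂ D)
    (rhoR : Aᵐᵒᵖ →ₐ[ℂ] Module.End ℂ D)
    (hL : ∀ m₁ j₁ m₂ j₂ n₁ n₂ l : ℤ,
      rhoL (a m₁ j₁ ⊗ₜ[ℂ] a m₂ j₂) (dd n₁ n₂ l) =
        Complex.exp (-(Complex.I *
            (lam * (((n₁ + m₁) * j₁ + (n₂ + m₂) * j₂ : ℤ) : ℝ)))) •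
          dd (n₁ + m₁) (n₂ + m₂) (l - j₁ - j₂))
    (hR : ∀ m j n₁ n₂ l : ℤ,
      rhoR (MulOpposite.op (a m j)) (dd n₁ n₂ l) =
        Complex.exp (Complex.I * (lam * (((m * (l - j)) : ℤ) : ℝ))) •
          dd (n₁ + m) (n₂ + m) (l - j)) :
    ∃ Φ : (TensorProduct ℂ (TensorProduct ℂ A D) D ⧸ coassocRel₁ rhoL rhoR) ≃ₗ[ℂ]
          (TensorProduct ℂ (TensorProduct ℂ D A) D ⧸ coassocRel₂ rhoL rhoR),
      (∀ c₁ c₂ c₃ : A, ∀ z w,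
        Φ (Submodule.Quotient.mk z) = Submodule.Quotient.mk w →
        Φ (Submodule.Quotient.mk (coassocL₁ rhoL c₁ c₂ c₃ z)) =
          Submodule.Quotient.mk (coassocL₂ rhoL c₁ c₂ c₃ w)) ∧
      (∀ c : A, ∀ z w,
        Φ (Submodule.Quotient.mk z) = Submodule.Quotient.mk w →
        Φ (Submodule.Quotient.mk (coassocR₁ rhoR c z)) =
          Submodule.Quotient.mk (coassocR₂ rhoR c w)) := by
  have hmul' (n₁ l₁ n₂ l₂ : ℤ) :
      b (n₁, l₁) * b (n₂, l₂) = phase lam (n₁ * l₂) • b (n₁ + n₂, l₁ + l₂) := by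
    rw [hb, hb, hb, hmul, phase]; push_cast; ring_nf
  have hL' (m₁ j₁ m₂ j₂ n₁ n₂ l : ℤ) : rhoL (b (m₁, j₁) ⊗ₜ b (m₂, j₂)) (bd (n₁, n₂, l)) =
      phase lam (-((n₁ + m₁) * j₁ + (n₂ + m₂) * j₂)) • bd (n₁ + m₁, n₂ + m₂, l - j₁ - j₂) := by
    rw [hb, hb, hbd, hbd, hL, phase]; push_cast; ring_nf
  have hR' (m j n₁ n₂ l : ℤ) : rhoR (op (b (m, j))) (bd (n₁, n₂, l)) =
      phase lam (m * (l - j)) • bd (n₁ + m, n₂ + m, l - j) := by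
    rw [hb, hbd, hbd, hR, phase]
  have hker₂ := ker_toNormalForm₂ hmul' hL' hR'
  let e₁ := Submodule.quotEquivOfRightInverse _ _ (toNormalForm₁_comp_ofNormalForm₁ lam b bd)
    (ker_toNormalForm₁ hmul' hL' hR')
  let e₂ := Submodule.quotEquivOfRightInverse _ _ (toNormalForm₂_comp_ofNormalForm₂ lam b bd) hker₂
  have hΦ (z w) : e₁.trans e₂.symm (Submodule.Quotient.mk z) = Submodule.Quotient.mk w ↔
      toNormalForm₁ lam b bd z = toNormalForm₂ lam b bd w := by
    simp [e₁, e₂, LinearEquiv.symm_apply_eq]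
  have hps₂ := toNormalForm₂_comp_ofNormalForm₂ lam b bd
  refine ⟨e₁.trans e₂.symm, fun c₁ c₂ c₃ z w hzw => ?_, fun c z w hzw => ?_⟩ <;>
    rw [hΦ] at hzw ⊢
  · exact LinearMap.apply_eq_of_ker_le_comap hps₂
      (hker₂ ▸ coassocRel₂_le_comap_coassocL₂ (commute_rhoL_rhoR hL' hR') c₁ c₂ c₃)
      (toNormalForm₁_comp_coassocL₁ hmul' hL' c₁ c₂ c₃) hzw
  · exact LinearMap.apply_eq_of_ker_le_comap hps₂
      (hker₂ ▸ coassocRel₂_le_comap_coassocR₂ (commute_rhoL_rhoR hL' hR') c)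
      (toNormalForm₁_comp_coassocR₁ hR' c) hzw

/-- Coassociativity (axiom (H1)) for the coproduct bimodule `Δ` of the hopfish
structure on the irrational rotation algebra: the `(A⊗A⊗A, A)`-bimodules
`(A ⊗ Δ) ⊗_{A⊗A} Δ` and `(Δ ⊗ A) ⊗_{A⊗A} Δ` are isomorphic, via a linear
equivalence of the balanced quotients intertwining the left `A⊗A⊗A`-action and
the right `A`-action. -/
theorem coproduct_coassociativity
    (lam : ℝ) (hlam : Irrational (lam / (2 * Real.pi)))
    (A : Type) [Ring A] [Algebra ℂ A]
    (a : ℤ → ℤ → A)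
    (b : Module.Basis (ℤ × ℤ) ℂ A) (hb : ∀ n l : ℤ, b (n, l) = a n l)
    (hmul : ∀ n₁ l₁ n₂ l₂ : ℤ,
      a n₁ l₁ * a n₂ l₂ =
        Complex.exp (Complex.I * (lam * n₁ * l₂)) • a (n₁ + n₂) (l₁ + l₂))
    (D : Type) [AddCommGroup D] [Module ℂ D]
    (dd : ℤ → ℤ → ℤ → D)
    (bd : Module.Basis (ℤ × ℤ × ℤ) ℂ D) (hbd : ∀ n₁ n₂ l : ℤ, bd (n₁, n₂, l) = dd n₁ n₂ l)
    (rhoL : TensorProduct ℂ A A →ₐ[ℂ] Module.End ℂ D)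
    (rhoR : Aᵐᵒᵖ →ₐ[ℂ] Module.End ℂ D)
    (hL : ∀ m₁ j₁ m₂ j₂ n₁ n₂ l : ℤ,
      rhoL (a m₁ j₁ ⊗ₜ[ℂ] a m₂ j₂) (dd n₁ n₂ l) =
        Complex.exp (-(Complex.I *
            (lam * (((n₁ + m₁) * j₁ + (n₂ + m₂) * j₂ : ℤ) : ℝ)))) •
          dd (n₁ + m₁) (n₂ + m₂) (l - j₁ - j₂))
    (hR : ∀ m j n₁ n₂ l : ℤ,
      rhoR (MulOpposite.op (a m j)) (dd n₁ n₂ l) =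
        Complex.exp (Complex.I * (lam * (((m * (l - j)) : ℤ) : ℝ))) •
          dd (n₁ + m) (n₂ + m) (l - j)) :
    ∃ Φ : (TensorProduct ℂ (TensorProduct ℂ A D) D ⧸ coassocRel₁ rhoL rhoR) ≃ₗ[ℂ]
          (TensorProduct ℂ (TensorProduct ℂ D A) D ⧸ coassocRel₂ rhoL rhoR),
      (∀ c₁ c₂ c₃ : A, ∀ z w,
        Φ (Submodule.Quotient.mk z) = Submodule.Quotient.mk w →
        Φ (Submodule.Quotient.mk (coassocL₁ rhoL c₁ c₂ c₃ z)) =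
          Submodule.Quotient.mk (coassocL₂ rhoL c₁ c₂ c₃ w)) ∧
      (∀ c : A, ∀ z w,
        Φ (Submodule.Quotient.mk z) = Submodule.Quotient.mk w →
        Φ (Submodule.Quotient.mk (coassocR₁ rhoR c z)) =
          Submodule.Quotient.mk (coassocR₂ rhoR c w)) :=
  coproduct_coassociativity_general lam A a b hb hmul D dd bd hbd rhoL rhoR hL hR
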